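/- A finite direct sum of essentially compressible modules is essentially compressible. -/

import Mathlib

open DirectSum

/-- A submodule `L` of `M` is *essential* if it meets every nonzero submodule
nontrivially. -/
def EssentialSubmodule {R : Type*} [Ring R] {M : Type*} [AddCommGroup M] [Module R M]
    (L : Submodule R M) : Prop :=
  ∀ N : Submodule R M, N ≠ ⊥ → L ⊓ N ≠ ⊥

/-- A module `M` is *essentially compressible* if every essential submodule of `M`
contains a submodule isomorphic to `M`. -/
def EssentiallyCompressible (R : Type*) [Ring R] (M : Type*) [AddCommGroup M]
    [Module R M] : Prop :=
  ∀ L : Submodule R M, EssentialSubmodule L →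
    ∃ K : Submodule R M, K ≤ L ∧ Nonempty (K ≃ₗ[R] M)

/-! The pullback of an essential submodule `L ≤ ⨁ i, M i` along each inclusion `M i → ⨁ i, M i`
is essential in `M i`, so it contains a copy `K i` of `M i`; the direct sum of the `K i` then
embeds in `L` and is isomorphic to `⨁ i, M i`. -/

theorem EssentialSubmodule.comap {R : Type*} [Ring R] {M N : Type*} [AddCommGroup M]
    [Module R M] [AddCommGroup N] [Module R N] {L : Submodule R M} (hL : EssentialSubmodule L)
    {f : N →ₗ[R] M} (hf : Function.Injective f) : EssentialSubmodule (L.comap f) := by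
  intro P hP hLP
  have hfP : P.map f ≠ ⊥ := by
    simpa using (Submodule.map_injective_of_injective hf).ne hP
  refine hL _ hfP ?_
  rw [← Submodule.map_bot f, ← hLP, Submodule.map_inf f hf, Submodule.map_comap_eq,
    inf_right_comm, inf_eq_right.2 LinearMap.map_le_range, inf_comm]

namespace DirectSum

variable {R : Type*} [Ring R] {ι : Type*} [DecidableEq ι] {M : ι → Type*}
  [∀ i, AddCommGroup (M i)] [∀ i, Module R (M i)]

theorem lof_injective (i : ι) : Function.Injective (lof R ι M i) :=
  of_injective i

theorem range_lmap_subtype_le {K : ∀ i, Submodule R (M i)} {L : Submodule R (⨁ i, M i)}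
    (hK : ∀ i, K i ≤ L.comap (lof R ι M i)) : LinearMap.range (lmap fun i ↦ (K i).subtype) ≤ L := by
  rintro _ ⟨x, rfl⟩
  induction x using DirectSum.induction_on with
  | zero => simp
  | of i k => simpa [lof_eq_of] using hK i k.2
  | add x y hx hy => simpa using L.add_mem hx hy

end DirectSum

theorem essentiallyCompressible_directSum_general (R : Type*) [Ring R] (ι : Type*)
    (M : ι → Type*) [∀ i, AddCommGroup (M i)] [∀ i, Module R (M i)]
    (h : ∀ i, EssentiallyCompressible R (M i)) :
    EssentiallyCompressible R (⨁ i, M i) := by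
  classical
  intro L hL
  choose K hKL hKM using fun i ↦ h i _ (hL.comap (lof_injective i))
  have hinj : Function.Injective (lmap fun i ↦ (K i).subtype) :=
    (lmap_injective _).2 fun i ↦ (K i).injective_subtype
  exact ⟨_, range_lmap_subtype_le hKL,
    ⟨(LinearEquiv.ofInjective _ hinj).symm ≪≫ₗ DFinsupp.mapRange.linearEquiv fun i ↦ (hKM i).some⟩⟩

/-- A finite direct sum of essentially compressible modules is essentially
compressible. -/
theorem essentiallyCompressible_directSum (R : Type*) [Ring R] (ι : Type*) [Fintype ι]
    (M : ι → Type*) [∀ i, AddCommGroup (M i)] [∀ i, Module R (M i)]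
    (h : ∀ i, EssentiallyCompressible R (M i)) :
    EssentiallyCompressible R (⨁ i, M i) :=
  essentiallyCompressible_directSum_general R ι M h
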